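/- With the Transformer Filter as defined (softmax-weighted average x̂_t = Σ_{i=t−H+1}^t α_{i,t} x̃_i with Gaussian weights α_{i,t} centered at x̃_t), for every ε₁ > 0, choosing β ≥ H²/(2e ε₁²) guarantees ‖x̂_t − x̃_t‖ ≤ ε₁ for all t ≥ 1. -/

import Mathlib

/-!
As the weights sum to `1`, the filter output minus the query `x t` is `∑ αᵢ (xᵢ - x t)`.
Since the query's own weight is `exp 0 = 1`, the softmax denominator is at least `1`, so
`αᵢ ≤ exp (-β γᵢ²)` with `γᵢ = ‖xᵢ - x t‖`, and each term is at most
`max_{γ} γ exp (-β γ²) = (2eβ)^{-1/2}`. Summing over the `H` tokens gives `H / √(2eβ)`,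
which is at most `ε₁` exactly when `β ≥ H² / (2e ε₁²)`.
-/

open Finset Real

lemma mul_exp_neg_mul_sq_le {β : ℝ} (hβ : 0 < β) (γ : ℝ) :
    γ * exp (-β * γ ^ 2) ≤ 1 / √(2 * exp 1 * β) := by
  have hsqrt : 0 < √(2 * exp 1 * β) := by positivity
  have hsq : (γ * √(2 * exp 1 * β)) ^ 2 ≤ exp (β * γ ^ 2) ^ 2 :=
    calc (γ * √(2 * exp 1 * β)) ^ 2 = exp 1 * (2 * β * γ ^ 2) := by
          rw [mul_pow, sq_sqrt (by positivity)]; ring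
      _ ≤ exp (2 * β * γ ^ 2) := exp_one_mul_le_exp
      _ = exp (β * γ ^ 2) ^ 2 := by rw [← exp_nat_mul]; ring_nf
  have hle : γ * √(2 * exp 1 * β) ≤ exp (β * γ ^ 2) := le_of_sq_le_sq hsq (exp_pos _).le
  rw [neg_mul, exp_neg, ← div_eq_mul_inv, le_div_iff₀ hsqrt, div_mul_eq_mul_div,
    div_le_iff₀ (exp_pos _)]
  linarith

lemma norm_sum_smul_sub_le {ι E : Type*} [NormedAddCommGroup E] [NormedSpace ℝ E]
    (s : Finset ι) (w : ι → ℝ) (hw : ∀ i ∈ s, 0 ≤ w i) (hw1 : ∑ i ∈ s, w i = 1)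
    (x : ι → E) (y : E) :
    ‖∑ i ∈ s, w i • x i - y‖ ≤ ∑ i ∈ s, w i * ‖x i - y‖ := by
  have hcenter : ∑ i ∈ s, w i • x i - y = ∑ i ∈ s, w i • (x i - y) := by
    simp only [smul_sub, sum_sub_distrib, ← sum_smul, hw1, one_smul]
  rw [hcenter]
  refine (norm_sum_le _ _).trans (sum_le_sum fun i hi => ?_)
  rw [norm_smul, Real.norm_of_nonneg (hw i hi)]

lemma norm_gaussian_softmax_average_sub_le {ι E : Type*} [Fintype ι] [NormedAddCommGroup E]
    [NormedSpace ℝ E] {β : ℝ} (hβ : 0 < β) (x : ι → E) (t : ι) :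
    ‖∑ i, (exp (-β * ‖x i - x t‖ ^ 2) / ∑ j, exp (-β * ‖x j - x t‖ ^ 2)) • x i - x t‖ ≤
      Fintype.card ι / √(2 * exp 1 * β) := by
  set f : ι → ℝ := fun i => exp (-β * ‖x i - x t‖ ^ 2)
  set S := ∑ j, f j
  have hS : 1 ≤ S :=
    calc 1 = f t := by simp [f]
      _ ≤ S := single_le_sum (f := f) (fun i _ => (exp_pos _).le) (mem_univ t)
  have hS0 : 0 < S := one_pos.trans_le hS
  have hweight : ∀ i, f i / S ≤ f i := fun i => div_le_self (exp_pos _).le hS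
  calc ‖∑ i, (f i / S) • x i - x t‖ ≤ ∑ i, f i / S * ‖x i - x t‖ :=
        norm_sum_smul_sub_le _ _ (fun i _ => by positivity)
          (by rw [← sum_div, div_self hS0.ne']) _ _
    _ ≤ ∑ _i : ι, 1 / √(2 * exp 1 * β) := sum_le_sum fun i _ =>
        calc f i / S * ‖x i - x t‖ ≤ f i * ‖x i - x t‖ :=
              mul_le_mul_of_nonneg_right (hweight i) (norm_nonneg _)
          _ ≤ 1 / √(2 * exp 1 * β) := by rw [mul_comm]; exact mul_exp_neg_mul_sq_le hβ _
    _ = Fintype.card ι / √(2 * exp 1 * β) := by simp [div_eq_mul_inv]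

/-- One step of the Transformer Filter: the Gaussian-softmax-weighted average of `H`
arbitrary tokens `x̃_0, …, x̃_{H−1}` (query the last token) is within `ε₁` of the last
token, provided `β ≥ H²/(2e ε₁²)`. -/
theorem stmt9 {n : ℕ} (H : ℕ) (hH : 0 < H)
    (xtilde : Fin H → EuclideanSpace ℝ (Fin n))
    (ε₁ : ℝ) (hε₁ : 0 < ε₁) (β : ℝ)
    (hβ : β ≥ (H : ℝ) ^ 2 / (2 * Real.exp 1 * ε₁ ^ 2)) :
    ‖(∑ i : Fin H,
        (Real.exp (-β * ‖xtilde i - xtilde ⟨H - 1, by omega⟩‖ ^ 2) /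
          ∑ j : Fin H, Real.exp (-β * ‖xtilde j - xtilde ⟨H - 1, by omega⟩‖ ^ 2)) •
          xtilde i) - xtilde ⟨H - 1, by omega⟩‖ ≤ ε₁ := by
  have hβ0 : 0 < β := lt_of_lt_of_le (by positivity) hβ
  refine (norm_gaussian_softmax_average_sub_le hβ0 xtilde _).trans ?_
  rw [Fintype.card_fin, div_le_iff₀ (by positivity), ← sqrt_sq hε₁.le, ← sqrt_mul (sq_nonneg _)]
  refine le_sqrt_of_sq_le ?_
  rw [ge_iff_le, div_le_iff₀ (by positivity)] at hβ
  linarith
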